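/- For any multicast discrete memoryless channel, any positive integer n, and any B with 0 ≤ B ≤ B_max, the n-th multicast capacity-energy function single-letterizes: C_n(B) = n·C_1(B). -/

import Mathlib

open scoped BigOperators

noncomputable section

/-- A probability vector on a finite alphabet. -/
def IsProbVec {α : Type} [Fintype α] (p : α → ℝ) : Prop :=
  (∀ a, 0 ≤ p a) ∧ (∑ a, p a) = 1

/-- A (row-stochastic) discrete channel. -/
def IsChannel {α β : Type} [Fintype β] (W : α → β → ℝ) : Prop :=
  ∀ x, (∀ y, 0 ≤ W x y) ∧ (∑ y, W x y) = 1

/-- The memoryless `n`-letter extension of a channel. -/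
def nCh {α β : Type} (W : α → β → ℝ) (n : ℕ) (x : Fin n → α) (y : Fin n → β) : ℝ :=
  ∏ i, W (x i) (y i)

/-- Output distribution induced by input distribution `p` through channel `W`. -/
def outDist {α β : Type} [Fintype α] (p : α → ℝ) (W : α → β → ℝ) (y : β) : ℝ :=
  ∑ x, p x * W x y

/-- Expected value `E[b(Y)]` of an energy function `b` at the channel output. -/
def outEnergy {α β : Type} [Fintype α] [Fintype β] (p : α → ℝ) (W : α → β → ℝ)
    (b : β → ℝ) : ℝ :=
  ∑ y, outDist p W y * b y

/-- Additive block extension of an energy function. -/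
def blockE {β : Type} (b : β → ℝ) {n : ℕ} (y : Fin n → β) : ℝ := ∑ i, b (y i)

/-- Mutual information `I(X;Y)` between the input `X ~ p` and the output of channel `W`. -/
def mutInfo {α β : Type} [Fintype α] [Fintype β] (p : α → ℝ) (W : α → β → ℝ) : ℝ :=
  ∑ x, ∑ y, p x * W x y * Real.log (W x y / outDist p W y)

/-- The `n`-th multicast capacity-energy function with common energy function `b` and
common scalar energy constraint `B`:
`C_n(B) = max_{B-admissible X₁ⁿ} min_ℓ I(X₁ⁿ; Y(ℓ)₁ⁿ)`. -/
def CnEq {𝓧 𝓨 : Type} [Fintype 𝓧] [Fintype 𝓨] {L : ℕ}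
    (W : Fin L → 𝓧 → 𝓨 → ℝ) (b : 𝓨 → ℝ) (B : ℝ) (n : ℕ) : ℝ :=
  sSup { r | ∃ p : (Fin n → 𝓧) → ℝ, IsProbVec p ∧
      (∀ ℓ, (n : ℝ) * B ≤ outEnergy p (nCh (W ℓ) n) (blockE b)) ∧
      r = ⨅ ℓ, mutInfo p (nCh (W ℓ) n) }

/-- The largest commonly deliverable energy:
`B_max = max_q min_ℓ Σ_{x,y} q(x) p_{Y(ℓ)|X}(y|x) b(y)`. -/
def Bmax {𝓧 𝓨 : Type} [Fintype 𝓧] [Fintype 𝓨] {L : ℕ}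
    (W : Fin L → 𝓧 → 𝓨 → ℝ) (b : 𝓨 → ℝ) : ℝ :=
  sSup { r | ∃ q : 𝓧 → ℝ, IsProbVec q ∧ r = ⨅ ℓ, outEnergy q (W ℓ) b }

/-!
An `n`-letter input `p` enters both the energy constraint and the converse bound only through
its averaged one-letter marginal `p̄ = n⁻¹ ∑ᵢ P_{Xᵢ}`. The output energy is additive, hence equal
to `n` times the single-letter energy of `p̄`. For the information, Gibbs' inequality bounds
`I(p; Wⁿ)` by the conditional relative entropy `D(Wⁿ ‖ rⁿ | p)` against the product `rⁿ` of the
output distribution `r` of `p̄`; over a memoryless channel this splits into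
`∑ᵢ D(W ‖ r | P_{Xᵢ}) = n D(W ‖ r | p̄) = n I(p̄; W)`. So every admissible `p` is dominated by an
admissible single-letter `p̄`, and conversely i.i.d. inputs `qⁿ` achieve exactly `n I(q; W)`.
Admissible inputs exist for every `B ≤ B_max` because `B_max` is attained on the compact simplex.
-/

open Finset

variable {α β : Type}

lemma pos_of_prod_pos {n : ℕ} {f : Fin n → ℝ} (hf : ∀ i, 0 ≤ f i) (h : 0 < ∏ i, f i)
    (i : Fin n) : 0 < f i :=
  (hf i).lt_of_ne (prod_ne_zero_iff.1 h.ne' i (mem_univ i)).symm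

lemma sum_prod_mul_apply [Fintype β] {n : ℕ} (g : Fin n → β → ℝ) (hg : ∀ j, ∑ c, g j c = 1)
    (i : Fin n) (φ : β → ℝ) :
    ∑ y : Fin n → β, (∏ j, g j (y j)) * φ (y i) = ∑ c, g i c * φ c := by
  classical
  let g' : Fin n → β → ℝ := fun j c => g j c * if j = i then φ c else 1
  have hsplit : ∀ y : Fin n → β, (∏ j, g j (y j)) * φ (y i) = ∏ j, g' j (y j) := fun y => by
    simp only [g', prod_mul_distrib, prod_ite_eq', mem_univ, if_true]
  rw [sum_congr rfl fun y _ => hsplit y, ← Fintype.prod_sum, prod_eq_single i]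
  · simp [g']
  · intro j _ hj
    simp [g', hj, hg j]
  · simp

lemma isChannel_nCh [Fintype β] {W : α → β → ℝ} (hW : IsChannel W) (n : ℕ) :
    IsChannel (nCh W n) := by
  classical
  refine fun x => ⟨fun y => prod_nonneg fun _ _ => (hW _).1 _, ?_⟩
  rw [show ∑ y, nCh W n x y = ∏ i, ∑ c, W (x i) c from (Fintype.prod_sum _).symm]
  exact prod_eq_one fun _ _ => (hW _).2

lemma pos_of_mul_nCh_pos [Fintype β] {n : ℕ} {p : (Fin n → α) → ℝ} {W : α → β → ℝ}
    (hp : ∀ x, 0 ≤ p x) (hW : IsChannel W) {x : Fin n → α} {y : Fin n → β}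
    (h : 0 < p x * nCh W n x y) :
    0 < p x ∧ ∀ i, 0 < W (x i) (y i) :=
  ⟨pos_of_mul_pos_left h ((isChannel_nCh hW n x).1 y),
    pos_of_prod_pos (fun _ => (hW _).1 _) (pos_of_mul_pos_right h (hp x))⟩

def prodVec (q : α → ℝ) (n : ℕ) (x : Fin n → α) : ℝ := ∏ i, q (x i)

lemma isProbVec_prodVec [Fintype α] {q : α → ℝ} (hq : IsProbVec q) (n : ℕ) :
    IsProbVec (prodVec q n) := by
  classical
  refine ⟨fun _ => prod_nonneg fun _ _ => hq.1 _, ?_⟩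
  rw [show ∑ x, prodVec q n x = ∏ _i : Fin n, ∑ a, q a from (Fintype.prod_sum _).symm]
  exact prod_eq_one fun _ _ => hq.2

lemma mul_le_outDist [Fintype α] [Fintype β] {q : α → ℝ} {W : α → β → ℝ} (hq : ∀ a, 0 ≤ q a)
    (hW : IsChannel W) (a : α) (c : β) : q a * W a c ≤ outDist q W c :=
  single_le_sum (fun a' _ => mul_nonneg (hq a') ((hW a').1 c)) (mem_univ a)

lemma isProbVec_outDist [Fintype α] [Fintype β] {q : α → ℝ} {W : α → β → ℝ} (hq : IsProbVec q)
    (hW : IsChannel W) : IsProbVec (outDist q W) := by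
  refine ⟨fun c => sum_nonneg fun a _ => mul_nonneg (hq.1 a) ((hW a).1 c), ?_⟩
  simp only [outDist]
  rw [sum_comm]
  simp only [← mul_sum, fun a => (hW a).2, mul_one, hq.2]

lemma outDist_prodVec_nCh [Fintype α] (q : α → ℝ) (W : α → β → ℝ) (n : ℕ) :
    outDist (prodVec q n) (nCh W n) = prodVec (outDist q W) n := by
  classical
  funext y
  simp only [outDist, prodVec, nCh, ← prod_mul_distrib]
  exact (Fintype.prod_sum fun i a => q a * W a (y i)).symm

open Classical in
def avgMarginal [Fintype α] {n : ℕ} (p : (Fin n → α) → ℝ) (a : α) : ℝ :=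
  (n : ℝ)⁻¹ * ∑ i, ∑ x with x i = a, p x

lemma natCast_mul_sum_avgMarginal_mul [Fintype α] {n : ℕ} (hn : 0 < n) (p : (Fin n → α) → ℝ)
    (f : α → ℝ) : n * ∑ a, avgMarginal p a * f a = ∑ i, ∑ x, p x * f (x i) := by
  classical
  have hn' : (n : ℝ) ≠ 0 := Nat.cast_ne_zero.2 hn.ne'
  calc n * ∑ a, avgMarginal p a * f a = ∑ i, ∑ a, ∑ x with x i = a, p x * f (x i) := by
        simp only [avgMarginal, mul_sum, sum_mul, ← mul_assoc, mul_inv_cancel₀ hn', one_mul]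
        rw [sum_comm]
        refine sum_congr rfl fun i _ => sum_congr rfl fun a _ => sum_congr rfl fun x hx => ?_
        rw [(mem_filter.1 hx).2]
    _ = ∑ i, ∑ x, p x * f (x i) :=
        sum_congr rfl fun i _ => sum_fiberwise univ (· i) fun x => p x * f (x i)

lemma isProbVec_avgMarginal [Fintype α] {n : ℕ} (hn : 0 < n) {p : (Fin n → α) → ℝ}
    (hp : IsProbVec p) : IsProbVec (avgMarginal p) := by
  have h := natCast_mul_sum_avgMarginal_mul hn p fun _ => 1
  simp only [mul_one, hp.2, sum_const, card_univ, Fintype.card_fin, nsmul_eq_mul] at h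
  exact ⟨fun _ => mul_nonneg (by positivity) (sum_nonneg fun _ _ => sum_nonneg fun x _ => hp.1 x),
    (mul_eq_left₀ (Nat.cast_ne_zero.2 hn.ne')).1 h⟩

lemma avgMarginal_pos [Fintype α] {n : ℕ} (hn : 0 < n) {p : (Fin n → α) → ℝ}
    (hp : ∀ x, 0 ≤ p x) {x : Fin n → α} (hx : 0 < p x) (i : Fin n) :
    0 < avgMarginal p (x i) := by
  classical
  refine mul_pos (by positivity) (hx.trans_le ?_)
  calc p x ≤ ∑ x' with x' i = x i, p x' :=
        single_le_sum (fun x' _ => hp x') (mem_filter.2 ⟨mem_univ x, rfl⟩)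
    _ ≤ ∑ j, ∑ x' with x' j = x i, p x' :=
        single_le_sum (f := fun j => ∑ x' with x' j = x i, p x')
          (fun j _ => sum_nonneg fun x' _ => hp x') (mem_univ i)

lemma avgMarginal_prodVec [Fintype α] {n : ℕ} (hn : 0 < n) {q : α → ℝ} (hq : ∑ a, q a = 1) :
    avgMarginal (prodVec q n) = q := by
  classical
  funext a
  have hcoord : ∀ i, ∑ x, prodVec q n x * (if x i = a then 1 else 0) = q a := fun i => by
    simpa [prodVec] using
      sum_prod_mul_apply (fun _ => q) (fun _ => hq) i fun c => if c = a then 1 else 0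
  have h := natCast_mul_sum_avgMarginal_mul hn (prodVec q n) fun c => if c = a then 1 else 0
  rw [sum_congr rfl fun i _ => hcoord i] at h
  simpa [hn.ne'] using h

lemma sum_nCh_mul_sum_eq [Fintype α] [Fintype β] {n : ℕ} (hn : 0 < n) {W : α → β → ℝ}
    (hW : IsChannel W) (p : (Fin n → α) → ℝ) (φ : α → β → ℝ) :
    ∑ x, ∑ y, p x * nCh W n x y * ∑ i, φ (x i) (y i)
      = n * ∑ a, avgMarginal p a * ∑ c, W a c * φ a c := by
  have hcoord : ∀ x i, ∑ y, nCh W n x y * φ (x i) (y i) = ∑ c, W (x i) c * φ (x i) c :=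
    fun x i => sum_prod_mul_apply (fun j => W (x j)) (fun j => (hW _).2) i (φ (x i))
  rw [natCast_mul_sum_avgMarginal_mul hn]
  simp only [← hcoord, mul_sum, ← mul_assoc]
  conv_lhs => arg 2; ext x; rw [sum_comm]
  exact sum_comm

lemma outEnergy_eq_sum_mul [Fintype α] [Fintype β] (q : α → ℝ) (W : α → β → ℝ) (b : β → ℝ) :
    outEnergy q W b = ∑ a, q a * ∑ c, W a c * b c := by
  simp only [outEnergy, outDist, sum_mul, mul_sum, mul_assoc]
  exact sum_comm

lemma outEnergy_nCh_blockE [Fintype α] [Fintype β] {n : ℕ} (hn : 0 < n) {W : α → β → ℝ}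
    (hW : IsChannel W) (p : (Fin n → α) → ℝ) (b : β → ℝ) :
    outEnergy p (nCh W n) (blockE b) = n * outEnergy (avgMarginal p) W b := by
  rw [outEnergy_eq_sum_mul, outEnergy_eq_sum_mul, ← sum_nCh_mul_sum_eq hn hW p fun _ c => b c]
  simp only [blockE, mul_sum, mul_assoc]

def condRelEntropy [Fintype α] [Fintype β] (p : α → ℝ) (W : α → β → ℝ) (r : β → ℝ) : ℝ :=
  ∑ x, ∑ y, p x * W x y * Real.log (W x y / r y)

lemma mutInfo_eq_condRelEntropy [Fintype α] [Fintype β] (p : α → ℝ) (W : α → β → ℝ) :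
    mutInfo p W = condRelEntropy p W (outDist p W) := rfl

lemma condRelEntropy_nCh_prodVec [Fintype α] [Fintype β] {n : ℕ} (hn : 0 < n)
    {p : (Fin n → α) → ℝ} {W : α → β → ℝ} {r : β → ℝ} (hp : ∀ x, 0 ≤ p x) (hW : IsChannel W)
    (hr : ∀ x y, 0 < p x * nCh W n x y → ∀ i, 0 < r (y i)) :
    condRelEntropy p (nCh W n) (prodVec r n) = n * condRelEntropy (avgMarginal p) W r := by
  have hlog : ∀ x y, p x * nCh W n x y * Real.log (nCh W n x y / prodVec r n y)
      = p x * nCh W n x y * ∑ i, Real.log (W (x i) (y i) / r (y i)) := by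
    intro x y
    rcases (mul_nonneg (hp x) ((isChannel_nCh hW n x).1 y)).eq_or_lt with h0 | hpos
    · rw [← h0, zero_mul, zero_mul]
    · have hWpos := (pos_of_mul_nCh_pos hp hW hpos).2
      rw [show nCh W n x y / prodVec r n y = ∏ i, W (x i) (y i) / r (y i) from
          (prod_div_distrib ..).symm,
        Real.log_prod fun i _ => (div_pos (hWpos i) (hr x y hpos i)).ne']
  rw [condRelEntropy, sum_congr rfl fun x _ => sum_congr rfl fun y _ => hlog x y,
    sum_nCh_mul_sum_eq hn hW p fun a c => Real.log (W a c / r c), condRelEntropy]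
  simp only [mul_sum, mul_assoc]

theorem mutInfo_le_condRelEntropy [Fintype α] [Fintype β] {p : α → ℝ} {W : α → β → ℝ}
    {r : β → ℝ} (hp : IsProbVec p) (hW : IsChannel W) (hr : IsProbVec r)
    (hpr : ∀ x y, 0 < p x * W x y → 0 < r y) : mutInfo p W ≤ condRelEntropy p W r := by
  set Q := outDist p W
  have hQ : IsProbVec Q := isProbVec_outDist hp hW
  have hterm : ∀ x y, p x * W x y * Real.log (W x y / Q y)
      ≤ p x * W x y * Real.log (W x y / r y) + p x * W x y * (r y / Q y - 1) := by
    intro x y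
    rcases (mul_nonneg (hp.1 x) ((hW x).1 y)).eq_or_lt with h0 | hpos
    · simp [← h0]
    · have hWxy : 0 < W x y := pos_of_mul_pos_right hpos (hp.1 x)
      have hQy : 0 < Q y := hpos.trans_le (mul_le_outDist hp.1 hW x y)
      have hry := hpr x y hpos
      rw [← mul_add]
      refine mul_le_mul_of_nonneg_left ?_ hpos.le
      calc Real.log (W x y / Q y) = Real.log (W x y / r y) + Real.log (r y / Q y) := by
            rw [← Real.log_mul (by positivity) (by positivity), div_mul_div_cancel₀ hry.ne']
        _ ≤ _ := by gcongr; exact Real.log_le_sub_one_of_pos (by positivity)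
  have hcorr : ∀ y, ∑ x, p x * W x y * (r y / Q y - 1) ≤ r y - Q y := by
    intro y
    rw [← sum_mul]
    change Q y * (r y / Q y - 1) ≤ _
    rcases (hQ.1 y).eq_or_lt with h0 | hQy
    · simpa [← h0] using hr.1 y
    · rw [mul_sub, mul_div_cancel₀ _ hQy.ne', mul_one]
  calc mutInfo p W
      ≤ ∑ x, ∑ y, (p x * W x y * Real.log (W x y / r y) + p x * W x y * (r y / Q y - 1)) :=
        sum_le_sum fun x _ => sum_le_sum fun y _ => hterm x y
    _ = condRelEntropy p W r + ∑ y, ∑ x, p x * W x y * (r y / Q y - 1) := by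
        simp only [sum_add_distrib, condRelEntropy]
        rw [sum_comm (f := fun x y => p x * W x y * (r y / Q y - 1))]
    _ ≤ condRelEntropy p W r + ∑ y, (r y - Q y) := by gcongr with y; exact hcorr y
    _ = condRelEntropy p W r := by rw [sum_sub_distrib, hr.2, hQ.2, sub_self, add_zero]

lemma mutInfo_le_card [Fintype α] [Fintype β] {q : α → ℝ} {W : α → β → ℝ} (hq : IsProbVec q)
    (hW : IsChannel W) : mutInfo q W ≤ Fintype.card α := by
  have hterm : ∀ x y, q x * W x y * Real.log (W x y / outDist q W y) ≤ W x y := by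
    intro x y
    have hw : 0 ≤ q x * W x y := mul_nonneg (hq.1 x) ((hW x).1 y)
    have hQ : q x * W x y ≤ outDist q W y := mul_le_outDist hq.1 hW x y
    calc q x * W x y * Real.log (W x y / outDist q W y)
        ≤ q x * W x y * (W x y / outDist q W y) :=
          mul_le_mul_of_nonneg_left (Real.log_le_self (div_nonneg ((hW x).1 y) (hw.trans hQ))) hw
      _ = W x y * (q x * W x y / outDist q W y) := by ring
      _ ≤ W x y := mul_le_of_le_one_right ((hW x).1 y) (div_le_one_of_le₀ hQ (hw.trans hQ))
  calc mutInfo q W ≤ ∑ x, ∑ y, W x y := sum_le_sum fun x _ => sum_le_sum fun y _ => hterm x y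
    _ = Fintype.card α := by simp [fun x => (hW x).2]

theorem mutInfo_nCh_le [Fintype α] [Fintype β] {n : ℕ} (hn : 0 < n) {p : (Fin n → α) → ℝ}
    {W : α → β → ℝ} (hp : IsProbVec p) (hW : IsChannel W) :
    mutInfo p (nCh W n) ≤ n * mutInfo (avgMarginal p) W := by
  set r := outDist (avgMarginal p) W
  have hpbar := isProbVec_avgMarginal hn hp
  have hr : ∀ x y, 0 < p x * nCh W n x y → ∀ i, 0 < r (y i) := by
    intro x y hxy i
    obtain ⟨hx, hWpos⟩ := pos_of_mul_nCh_pos hp.1 hW hxy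
    exact (mul_pos (avgMarginal_pos hn hp.1 hx i) (hWpos i)).trans_le
      (mul_le_outDist hpbar.1 hW _ _)
  calc mutInfo p (nCh W n) ≤ condRelEntropy p (nCh W n) (prodVec r n) :=
        mutInfo_le_condRelEntropy hp (isChannel_nCh hW n)
          (isProbVec_prodVec (isProbVec_outDist hpbar hW) n)
          fun x y hxy => prod_pos fun i _ => hr x y hxy i
    _ = n * mutInfo (avgMarginal p) W := condRelEntropy_nCh_prodVec hn hp.1 hW hr

theorem mutInfo_prodVec_nCh [Fintype α] [Fintype β] {n : ℕ} (hn : 0 < n) {q : α → ℝ}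
    {W : α → β → ℝ} (hq : IsProbVec q) (hW : IsChannel W) :
    mutInfo (prodVec q n) (nCh W n) = n * mutInfo q W := by
  have hr : ∀ x y, 0 < prodVec q n x * nCh W n x y → ∀ i, 0 < outDist q W (y i) := by
    intro x y hxy i
    obtain ⟨hx, hWpos⟩ := pos_of_mul_nCh_pos (isProbVec_prodVec hq n).1 hW hxy
    exact (mul_pos (pos_of_prod_pos (fun _ => hq.1 _) hx i) (hWpos i)).trans_le
      (mul_le_outDist hq.1 hW _ _)
  rw [mutInfo_eq_condRelEntropy, outDist_prodVec_nCh,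
    condRelEntropy_nCh_prodVec hn (isProbVec_prodVec hq n).1 hW hr, avgMarginal_prodVec hn hq.2]
  rfl

lemma exists_isProbVec_forall_le_outEnergy [Fintype α] [Fintype β] [Nonempty α] {L : ℕ}
    (W : Fin L → α → β → ℝ) (b : β → ℝ) {B : ℝ} (hB : B ≤ Bmax W b) :
    ∃ q, IsProbVec q ∧ ∀ ℓ, B ≤ outEnergy q (W ℓ) b := by
  set f := fun q : α → ℝ => ⨅ ℓ, outEnergy q (W ℓ) b
  have hf : UpperSemicontinuous f :=
    upperSemicontinuous_ciInf (fun _ => Finite.bddBelow_range _) fun ℓ =>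
      (by unfold outEnergy outDist; fun_prop : Continuous fun q => outEnergy q (W ℓ) b)
        |>.upperSemicontinuous
  obtain ⟨q₀, hq₀, hmax⟩ := (hf.upperSemicontinuousOn _).exists_isMaxOn
    (Set.Nonempty.of_subtype (s := stdSimplex ℝ α)) (isCompact_stdSimplex ℝ α)
  have hBmax : Bmax W b ≤ f q₀ := by
    refine csSup_le ⟨f q₀, q₀, hq₀, rfl⟩ ?_
    rintro _ ⟨q, hq, rfl⟩
    exact isMaxOn_iff.1 hmax q hq
  exact ⟨q₀, hq₀, fun ℓ => hB.trans (hBmax.trans (ciInf_le (Finite.bddBelow_range _) ℓ))⟩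

lemma csSup_eq_mul_csSup_of_forall {S T : Set ℝ} {c : ℝ} (hc : 0 < c) (hT : T.Nonempty)
    (hTb : BddAbove T) (hST : ∀ s ∈ S, ∃ t ∈ T, s ≤ c * t) (hTS : ∀ t ∈ T, c * t ∈ S) :
    sSup S = c * sSup T := by
  obtain ⟨t₀, ht₀⟩ := hT
  have hS : ∀ s ∈ S, s ≤ c * sSup T := fun s hs => by
    obtain ⟨t, ht, hst⟩ := hST s hs
    exact hst.trans (mul_le_mul_of_nonneg_left (le_csSup hTb ht) hc.le)
  refine le_antisymm (csSup_le ⟨_, hTS t₀ ht₀⟩ hS) ?_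
  rw [← le_div_iff₀' hc]
  exact csSup_le ⟨t₀, ht₀⟩ fun t ht => (le_div_iff₀' hc).2 (le_csSup ⟨_, hS⟩ (hTS t ht))

def capEnergy [Fintype α] [Fintype β] {L : ℕ} (W : Fin L → α → β → ℝ) (b : β → ℝ) (B : ℝ) : ℝ :=
  sSup {r | ∃ q : α → ℝ, IsProbVec q ∧ (∀ ℓ, B ≤ outEnergy q (W ℓ) b) ∧
    r = ⨅ ℓ, mutInfo q (W ℓ)}

theorem CnEq_eq_mul_capEnergy [Fintype α] [Fintype β] [Nonempty α] {L : ℕ} (hL : 0 < L)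
    {W : Fin L → α → β → ℝ} (hW : ∀ ℓ, IsChannel (W ℓ)) {b : β → ℝ} {B : ℝ}
    (hB : B ≤ Bmax W b) {n : ℕ} (hn : 0 < n) : CnEq W b B n = n * capEnergy W b B := by
  have hn' : (0 : ℝ) < n := Nat.cast_pos.2 hn
  obtain ⟨q₀, hq₀, hq₀B⟩ := exists_isProbVec_forall_le_outEnergy W b hB
  refine csSup_eq_mul_csSup_of_forall hn' ⟨_, q₀, hq₀, hq₀B, rfl⟩ ⟨Fintype.card α, ?_⟩ ?_ ?_
  · rintro _ ⟨q, hq, -, rfl⟩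
    exact (ciInf_le (Finite.bddBelow_range _) ⟨0, hL⟩).trans (mutInfo_le_card hq (hW _))
  · rintro _ ⟨p, hp, hpB, rfl⟩
    refine ⟨_, ⟨avgMarginal p, isProbVec_avgMarginal hn hp, fun ℓ => ?_, rfl⟩, ?_⟩
    · have h := hpB ℓ
      rw [outEnergy_nCh_blockE hn (hW ℓ)] at h
      exact le_of_mul_le_mul_left h hn'
    · have : Nonempty (Fin L) := ⟨⟨0, hL⟩⟩
      rw [Real.mul_iInf_of_nonneg hn'.le]
      exact ciInf_mono (Finite.bddBelow_range _) fun ℓ => mutInfo_nCh_le hn hp (hW ℓ)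
  · rintro _ ⟨q, hq, hqB, rfl⟩
    refine ⟨prodVec q n, isProbVec_prodVec hq n, fun ℓ => ?_, ?_⟩
    · rw [outEnergy_nCh_blockE hn (hW ℓ), avgMarginal_prodVec hn hq.2]
      exact mul_le_mul_of_nonneg_left (hqB ℓ) hn'.le
    · rw [Real.mul_iInf_of_nonneg hn'.le]
      exact iInf_congr fun ℓ => (mutInfo_prodVec_nCh hn hq (hW ℓ)).symm

theorem CnEq_single_letter_general
    {𝓧 𝓨 : Type} [Fintype 𝓧] [Fintype 𝓨] [Nonempty 𝓧] {L : ℕ} (hL : 0 < L)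
    (W : Fin L → 𝓧 → 𝓨 → ℝ) (hW : ∀ ℓ, IsChannel (W ℓ))
    (b : 𝓨 → ℝ)
    (n : ℕ) (hn : 0 < n) (B : ℝ)
    (hB : B ≤ Bmax W b) :
    CnEq W b B n = n * CnEq W b B 1 := by
  rw [CnEq_eq_mul_capEnergy hL hW hB hn, CnEq_eq_mul_capEnergy hL hW hB one_pos, Nat.cast_one,
    one_mul]

/-- **Single-letterization of the `n`-th multicast capacity-energy function** (Theorem 3):
for any multicast DMC, any `n ∈ ℤ⁺` and any `0 ≤ B ≤ B_max`, `C_n(B) = n · C_1(B)`. -/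
theorem CnEq_single_letter
    {𝓧 𝓨 : Type} [Fintype 𝓧] [Fintype 𝓨] [Nonempty 𝓧] {L : ℕ} (hL : 0 < L)
    (W : Fin L → 𝓧 → 𝓨 → ℝ) (hW : ∀ ℓ, IsChannel (W ℓ))
    (b : 𝓨 → ℝ) (hb : ∀ y, 0 ≤ b y)
    (n : ℕ) (hn : 0 < n) (B : ℝ)
    (hB0 : 0 ≤ B) (hB : B ≤ Bmax W b) :
    CnEq W b B n = n * CnEq W b B 1 :=
  CnEq_single_letter_general hL W hW b n hn B hB

end
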